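/- arXiv:1412.5346 — 2 statements merged into one kernel-verified Lean document; each statement's English description precedes it below -/
import Mathlib

section
/- Let S be a skew-symmetric constant matrix, H : ℝⁿ → ℝ continuously differentiable, and h > 0. If z₀, z₁ ∈ ℝⁿ satisfy the averaged vector field (AVF) relation (z₁ - z₀)/h = S ∫₀¹ ∇H(ξ z₁ + (1-ξ) z₀) dξ, then H(z₁) = H(z₀). -/
open Matrix

/-- Energy conservation of the (second order) AVF method: if
`(z₁ - z₀)/h = S ∫₀¹ ∇H(ξ z₁ + (1-ξ) z₀) dξ` with `S` skew-symmetric and `H` C¹,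
then `H z₁ = H z₀`. -/
theorem stmt_2 {n : ℕ} (S : Matrix (Fin n) (Fin n) ℝ) (hS : Sᵀ = -S)
    (H : EuclideanSpace ℝ (Fin n) → ℝ) (hH : ContDiff ℝ 1 H)
    (h : ℝ) (hh : 0 < h) (z₀ z₁ : EuclideanSpace ℝ (Fin n))
    (havf : (1 / h) • (z₁ - z₀) =
      (WithLp.toLp 2 (S.mulVec
        (((∫ ξ in (0:ℝ)..1, gradient H (ξ • z₁ + (1 - ξ) • z₀)) :
            EuclideanSpace ℝ (Fin n)) : Fin n → ℝ)) : EuclideanSpace ℝ (Fin n))) :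
    H z₁ = H z₀ := by
  set g : ℝ → EuclideanSpace ℝ (Fin n) := fun ξ => ξ • z₁ + (1 - ξ) • z₀ with hg
  have hdiff : Differentiable ℝ H := hH.differentiable one_ne_zero
  have hgradcont : Continuous (fun x => gradient H x) := by
    have h1 : Continuous (fderiv ℝ H) := hH.continuous_fderiv one_ne_zero
    exact (InnerProductSpace.toDual ℝ _).symm.continuous.comp h1
  have hgcont : Continuous g := by
    apply Continuous.add
    · exact continuous_id.smul continuous_const
    · exact (continuous_const.sub continuous_id).smul continuous_const
  have hgrad_comp : Continuous (fun ξ => gradient H (g ξ)) := hgradcont.comp hgcont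
  have hderiv : ∀ ξ : ℝ, HasDerivAt (fun t => H (g t))
      ((inner ℝ (gradient H (g ξ)) (z₁ - z₀) : ℝ)) ξ := by
    intro ξ
    have hg' : HasDerivAt g (z₁ - z₀) ξ := by
      have h1 : HasDerivAt (fun t : ℝ => t • z₁) ((1:ℝ) • z₁) ξ :=
        (hasDerivAt_id ξ).smul_const z₁
      have h2 : HasDerivAt (fun t : ℝ => (1 - t) • z₀) ((-1:ℝ) • z₀) ξ := by
        have : HasDerivAt (fun t : ℝ => 1 - t) (-1) ξ := by
          simpa using (hasDerivAt_id ξ).const_sub (1:ℝ)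
        exact this.smul_const z₀
      have := h1.add h2
      exact (by simpa [sub_eq_add_neg, Pi.add_def] using this :
        HasDerivAt (fun t : ℝ => t • z₁ + (1 - t) • z₀) (z₁ - z₀) ξ)
    have hH' : HasFDerivAt H (fderiv ℝ H (g ξ)) (g ξ) := (hdiff (g ξ)).hasFDerivAt
    have hcomp := hH'.comp_hasDerivAt ξ hg'
    have e : (inner ℝ (gradient H (g ξ)) (z₁ - z₀) : ℝ) = fderiv ℝ H (g ξ) (z₁ - z₀) :=
      InnerProductSpace.toDual_symm_apply
    rw [e]; exact hcomp
  have hint : IntervalIntegrable (fun ξ => (inner ℝ (gradient H (g ξ)) (z₁ - z₀) : ℝ))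
      MeasureTheory.volume 0 1 := by
    exact (hgrad_comp.inner continuous_const).intervalIntegrable 0 1
  have hftc : ∫ ξ in (0:ℝ)..1, (inner ℝ (gradient H (g ξ)) (z₁ - z₀) : ℝ) =
      H (g 1) - H (g 0) :=
    intervalIntegral.integral_eq_sub_of_hasDerivAt (fun ξ _ => hderiv ξ) hint
  set v : EuclideanSpace ℝ (Fin n) := ∫ ξ in (0:ℝ)..1, gradient H (g ξ) with hv
  have hintv : IntervalIntegrable (fun ξ => gradient H (g ξ)) MeasureTheory.volume 0 1 :=
    hgrad_comp.intervalIntegrable 0 1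
  have hswap : ∫ ξ in (0:ℝ)..1, (inner ℝ (gradient H (g ξ)) (z₁ - z₀) : ℝ) =
      (inner ℝ v (z₁ - z₀) : ℝ) := by
    have := ((innerSL ℝ (E := EuclideanSpace ℝ (Fin n))).flip (z₁ - z₀)).intervalIntegral_comp_comm hintv
    simpa only [ContinuousLinearMap.flip_apply, innerSL_apply_apply] using this
  have hz : z₁ - z₀ = h • (WithLp.toLp 2 (S.mulVec (v : Fin n → ℝ)) : EuclideanSpace ℝ (Fin n)) := by
    have := congrArg (fun w => h • w) havf
    simpa [smul_smul, hh.ne', mul_one_div, div_self] using this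
  have hskew : (inner ℝ v (WithLp.toLp 2 (S.mulVec (v : Fin n → ℝ)) : EuclideanSpace ℝ (Fin n)) : ℝ) = 0 := by
    have h1 : (inner ℝ v (WithLp.toLp 2 (S.mulVec (v : Fin n → ℝ)) : EuclideanSpace ℝ (Fin n)) : ℝ) =
        (v : Fin n → ℝ) ⬝ᵥ S *ᵥ (v : Fin n → ℝ) := by
      simp [PiLp.inner_apply, dotProduct, RCLike.inner_apply, mul_comm]
    have h2 : (v : Fin n → ℝ) ⬝ᵥ S *ᵥ (v : Fin n → ℝ) =
        -((v : Fin n → ℝ) ⬝ᵥ S *ᵥ (v : Fin n → ℝ)) := by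
      calc (v : Fin n → ℝ) ⬝ᵥ S *ᵥ (v : Fin n → ℝ)
          = ((v : Fin n → ℝ) ᵥ* S) ⬝ᵥ (v : Fin n → ℝ) := dotProduct_mulVec _ _ _
        _ = (Sᵀ *ᵥ (v : Fin n → ℝ)) ⬝ᵥ (v : Fin n → ℝ) := by rw [Matrix.mulVec_transpose]
        _ = ((-S) *ᵥ (v : Fin n → ℝ)) ⬝ᵥ (v : Fin n → ℝ) := by rw [hS]
        _ = -((v : Fin n → ℝ) ⬝ᵥ S *ᵥ (v : Fin n → ℝ)) := by
            rw [Matrix.neg_mulVec, neg_dotProduct, dotProduct_comm]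
    rw [h1]; linarith
  have hfin : H z₁ - H z₀ = 0 := by
    have hg1 : g 1 = z₁ := by simp [hg]
    have hg0 : g 0 = z₀ := by simp [hg]
    rw [← hg1, ← hg0, ← hftc, hswap, hz, inner_smul_right, hskew, mul_zero]
  linarith
end

section
/- Let b be the mapping on rooted trees of order ≤ 3 defined by the substitution-law equations b⋆a(τ) = 1/γ(τ), where a(•)=1, a([•])=1/2, a([•,•])=1/3, a([[•]])=1/4 and b⋆a is given by: b⋆a(•)=a(•)b(•); b⋆a([•]) = a(•)b([•]) + a([•])b(•)²; b⋆a([•,•]) = a(•)b([•,•]) + 2a([•])b(•)b([•]) + a([•,•])b(•)³; b⋆a([[•]]) = a(•)b([[•]]) + 2a([•])b(•)b([•]) + a([[•]])b(•)³. Then b(•) = 1, b([•]) = 0, b([•,•]) = 0, and b([[•]]) = -1/12. -/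
/-- Rooted trees: `node ts` grafts the roots of the trees in `ts` to a new
root vertex; `node []` is the single-vertex tree `•`. -/
inductive RTree : Type where
  | node : List RTree → RTree

/-- The order `|τ|` of a rooted tree: its number of vertices. -/
def RTree.order : RTree → ℕ
  | .node ts => 1 + (ts.attach.map (fun t => t.1.order)).sum
decreasing_by
  have := List.sizeOf_lt_of_mem t.2
  simp only [RTree.node.sizeOf_spec]
  omega

/-- The density `γ(τ)`: `γ(•) = 1` and `γ([τ₁,…,τ_m]) = |τ|·γ(τ₁)⋯γ(τ_m)`. -/
def RTree.gamma : RTree → ℕ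
  | .node ts =>
      (RTree.node ts).order * (ts.attach.map (fun t => t.1.gamma)).prod
decreasing_by
  have := List.sizeOf_lt_of_mem t.2
  simp only [RTree.node.sizeOf_spec]
  omega

/-- The AVF B-series coefficient: `a(•) = 1` and
`a([τ₁,…,τ_m]) = (1/(m+1))·a(τ₁)⋯a(τ_m)`. -/
def RTree.avf : RTree → ℚ
  | .node ts =>
      (1 / (ts.length + 1)) * (ts.attach.map (fun t => t.1.avf)).prod
decreasing_by
  have := List.sizeOf_lt_of_mem t.2
  simp only [RTree.node.sizeOf_spec]
  omega

/-- The single-vertex tree `•`. -/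
def t1 : RTree := .node []
/-- The tree `[•]`. -/
def t2 : RTree := .node [t1]
/-- The tree `[•,•]`. -/
def t3 : RTree := .node [t1, t1]
/-- The tree `[[•]]`. -/
def t4 : RTree := .node [t2]

/-- Solving the substitution-law equations `b⋆a(τ) = 1/γ(τ)` for the AVF
coefficients `a(•)=1, a([•])=1/2, a([•,•])=1/3, a([[•]])=1/4` on trees of order
≤ 3 gives `b(•)=1, b([•])=0, b([•,•])=0, b([[•]])=-1/12`. -/
theorem stmt_19 (b : RTree → ℚ)
    (e1 : t1.avf * b t1 = 1 / (t1.gamma : ℚ))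
    (e2 : t1.avf * b t2 + t2.avf * (b t1) ^ 2 = 1 / (t2.gamma : ℚ))
    (e3 : t1.avf * b t3 + 2 * t2.avf * b t1 * b t2 + t3.avf * (b t1) ^ 3 =
      1 / (t3.gamma : ℚ))
    (e4 : t1.avf * b t4 + 2 * t2.avf * b t1 * b t2 + t4.avf * (b t1) ^ 3 =
      1 / (t4.gamma : ℚ)) :
    b t1 = 1 ∧ b t2 = 0 ∧ b t3 = 0 ∧ b t4 = -(1 / 12) := by

  have ha1 : t1.avf = 1 := by simp [t1, RTree.avf]
  have ha2 : t2.avf = 1/2 := by simp [t1, t2, RTree.avf]; norm_num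
  have ha3 : t3.avf = 1/3 := by simp [t1, t3, RTree.avf]; norm_num
  have ha4 : t4.avf = 1/4 := by simp [t1, t2, t4, RTree.avf]; norm_num
  have hg1 : t1.gamma = 1 := by simp [t1, RTree.gamma, RTree.order]
  have hg2 : t2.gamma = 2 := by simp [t1, t2, RTree.gamma, RTree.order]
  have hg3 : t3.gamma = 3 := by simp [t1, t3, RTree.gamma, RTree.order]
  have hg4 : t4.gamma = 6 := by simp [t1, t2, t4, RTree.gamma, RTree.order]
  simp only [ha1, ha2, ha3, ha4, hg1, hg2, hg3, hg4] at e1 e2 e3 e4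
  have h1 : b t1 = 1 := by linarith
  rw [h1] at e2 e3 e4
  have h2 : b t2 = 0 := by norm_num at e2; linarith
  rw [h2] at e3 e4
  refine ⟨h1, h2, by norm_num at e3 ⊢; linarith, by norm_num at e4 ⊢; linarith⟩
end
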